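/- arXiv:1701.06263 — 2 statements merged into one kernel-verified Lean document; each statement's English description precedes it below -/
import Mathlib

section
/- Let C ∈ S(K) be symmetric. Then the operator 𝒞_C : H(K) → H(K) defined by (𝒞_C f)(s) = ⟨C(s,·), f⟩_{H(K)} is a Hilbert–Schmidt operator, and its Hilbert–Schmidt norm equals ‖C‖_{H(K⊗K)}. -/
/-!
Equal Gram matrices give an isometry `W : H(K ⊗ K) → ℓ²(ι, H(K))` sending the kernel section
`φ₂ (s, t)` to `j ↦ ⟪b j, φ t⟫ • φ s`, which is `φ s ⊗ φ t` once `H ⊗ H` is read as `ℓ²(ι, H)`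
through the basis in the second factor. Testing `W C` against these tensors and extending by
density in both variables shows that the `j`-th entry of `W C` is `A (b j)`, hence
`∑ⱼ ‖A (b j)‖² = ‖W C‖² = ‖C‖²`.
-/

open scoped RealInnerProductSpace lp InnerProductSpace

section GramIsometry

variable {𝕜 α E F : Type*} [RCLike 𝕜]
  [NormedAddCommGroup E] [InnerProductSpace 𝕜 E] [NormedAddCommGroup F] [InnerProductSpace 𝕜 F]
  {f : α → E} {g : α → F}

theorem inner_linearCombination_eq_of_inner_eq (hfg : ∀ a a', ⟪g a, g a'⟫_𝕜 = ⟪f a, f a'⟫_𝕜)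
    (x y : α →₀ 𝕜) :
    ⟪Finsupp.linearCombination 𝕜 g x, Finsupp.linearCombination 𝕜 g y⟫_𝕜 =
      ⟪Finsupp.linearCombination 𝕜 f x, Finsupp.linearCombination 𝕜 f y⟫_𝕜 := by
  simp [Finsupp.linearCombination_apply, Finsupp.sum_inner, Finsupp.inner_sum, inner_smul_left,
    inner_smul_right, hfg]

theorem norm_linearCombination_eq_of_inner_eq (hfg : ∀ a a', ⟪g a, g a'⟫_𝕜 = ⟪f a, f a'⟫_𝕜)
    (x : α →₀ 𝕜) :
    ‖Finsupp.linearCombination 𝕜 g x‖ = ‖Finsupp.linearCombination 𝕜 f x‖ := by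
  rw [norm_eq_sqrt_re_inner (𝕜 := 𝕜), norm_eq_sqrt_re_inner (𝕜 := 𝕜),
    inner_linearCombination_eq_of_inner_eq hfg]

theorem exists_linearIsometry_apply_eq_of_inner_eq [CompleteSpace F]
    (hf : (Submodule.span 𝕜 (Set.range f)).topologicalClosure = ⊤)
    (hfg : ∀ a a', ⟪g a, g a'⟫_𝕜 = ⟪f a, f a'⟫_𝕜) :
    ∃ W : E →ₗᵢ[𝕜] F, ∀ a, W (f a) = g a := by
  set e := Finsupp.linearCombination 𝕜 f
  set L := Finsupp.linearCombination 𝕜 g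
  have hdense : DenseRange e := by
    rw [DenseRange, ← LinearMap.coe_range, Finsupp.range_linearCombination]
    exact Submodule.dense_iff_topologicalClosure_eq_top.2 hf
  have hext : ∀ x, L.extendOfNorm e (e x) = L x :=
    LinearMap.extendOfNorm_eq hdense
      ⟨1, fun x => by simp [L, e, norm_linearCombination_eq_of_inner_eq hfg]⟩
  refine ⟨⟨(L.extendOfNorm e).toLinearMap, fun x => ?_⟩, fun a => ?_⟩
  · refine hdense.induction_on (p := fun x => ‖L.extendOfNorm e x‖ = ‖x‖) x
      (isClosed_eq (L.extendOfNorm e).continuous.norm continuous_norm) fun y => ?_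
    rw [hext, norm_linearCombination_eq_of_inner_eq hfg]
  · simpa [e, L] using hext (Finsupp.single a 1)

end GramIsometry

namespace lp

theorem hasSum_norm_sq {ι : Type*} {E : ι → Type*} [∀ i, NormedAddCommGroup (E i)] (v : lp E 2) :
    HasSum (fun i => ‖v i‖ ^ 2) (‖v‖ ^ 2) := by
  simpa using lp.hasSum_norm (p := 2) (by norm_num) v

variable {ι 𝕜 E : Type*} [RCLike 𝕜] [NormedAddCommGroup E] [InnerProductSpace 𝕜 E]

theorem memℓp_smul_const (c : ℓ²(ι, 𝕜)) (u : E) : Memℓp (fun i => c i • u) 2 :=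
  ((lp.memℓp c).norm.const_mul ‖u‖).mono fun i => by rw [norm_smul, mul_comm]

def smulRightₗ (u : E) : ℓ²(ι, 𝕜) →ₗ[𝕜] ℓ²(ι, E) where
  toFun c := ⟨fun i => c i • u, memℓp_smul_const c u⟩
  map_add' c c' := lp.ext <| funext fun i => add_smul (c i) (c' i) u
  map_smul' a c := lp.ext <| funext fun i => mul_smul a (c i) u

theorem inner_smulRightₗ (u u' : E) (c c' : ℓ²(ι, 𝕜)) :
    ⟪smulRightₗ u c, smulRightₗ u' c'⟫_𝕜 = ⟪c, c'⟫_𝕜 * ⟪u, u'⟫_𝕜 := by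
  simp only [lp.inner_eq_tsum, ← tsum_mul_right]
  refine tsum_congr fun i => ?_
  simp [smulRightₗ, inner_smul_left, inner_smul_right, mul_assoc]

theorem norm_smulRightₗ (u : E) (c : ℓ²(ι, 𝕜)) : ‖smulRightₗ u c‖ = ‖c‖ * ‖u‖ := by
  have h := inner_smulRightₗ u u c c
  rw [inner_self_eq_norm_sq_to_K, inner_self_eq_norm_sq_to_K, inner_self_eq_norm_sq_to_K,
    ← mul_pow] at h
  exact_mod_cast (pow_left_inj₀ (norm_nonneg _) (by positivity) two_ne_zero).1 (by exact_mod_cast h)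

noncomputable def smulRight (u : E) : ℓ²(ι, 𝕜) →L[𝕜] ℓ²(ι, E) :=
  (smulRightₗ u).mkContinuous ‖u‖ fun c => (norm_smulRightₗ u c).trans_le (mul_comm _ _).le

@[simp]
theorem smulRight_apply (u : E) (c : ℓ²(ι, 𝕜)) (i : ι) : smulRight u c i = c i • u := rfl

theorem inner_smulRight (u u' : E) (c c' : ℓ²(ι, 𝕜)) :
    ⟪smulRight u c, smulRight u' c'⟫_𝕜 = ⟪c, c'⟫_𝕜 * ⟪u, u'⟫_𝕜 :=
  inner_smulRightₗ u u' c c'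

theorem smulRight_single [DecidableEq ι] (u : E) (i : ι) :
    smulRight u (lp.single 2 i (1 : 𝕜)) = lp.single 2 i u := by
  ext j
  by_cases h : j = i <;> simp [h]

end lp

theorem HilbertBasis.lp_apply_eq_of_inner_smulRight {T ι H : Type*} [NormedAddCommGroup H]
    [InnerProductSpace ℝ H] (b : HilbertBasis ι ℝ H) {φ : T → H}
    (hφ : (Submodule.span ℝ (Set.range φ)).topologicalClosure = ⊤) {A : H →L[ℝ] H}
    {v : ℓ²(ι, H)} (hv : ∀ s t, ⟪v, lp.smulRight (φ s) (b.repr (φ t))⟫ = ⟪φ s, A (φ t)⟫)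
    (j : ι) : v j = A (b j) := by
  classical
  have hdense : Dense (Submodule.span ℝ (Set.range φ) : Set H) :=
    Submodule.dense_iff_topologicalClosure_eq_top.2 hφ
  have hrow : ∀ s w, ⟪v, lp.smulRight (φ s) (b.repr w)⟫ = ⟪φ s, A w⟫ := fun s w =>
    DFunLike.congr_fun (ContinuousLinearMap.ext_on hdense
      (f := (innerSL ℝ v).comp
        ((lp.smulRight (φ s)).comp (b.repr.toContinuousLinearEquiv : H →L[ℝ] ℓ²(ι, ℝ))))
      (g := (innerSL ℝ (φ s)).comp A) (by rintro _ ⟨t, rfl⟩; exact hv s t)) w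
  refine innerSL_inj.1 <| ContinuousLinearMap.ext_on hdense ?_
  rintro _ ⟨s, rfl⟩
  have h := hrow s (b j)
  rw [b.repr_self, lp.smulRight_single, lp.inner_single_right] at h
  simpa [real_inner_comm] using h

theorem operator_is_hilbert_schmidt_with_norm_general
    {T : Type*} {H H2 : Type*}
    [NormedAddCommGroup H] [InnerProductSpace ℝ H] [CompleteSpace H]
    [NormedAddCommGroup H2] [InnerProductSpace ℝ H2]
    (φ : T → H)
    (hφdense : (Submodule.span ℝ (Set.range φ)).topologicalClosure = ⊤)
    (φ₂ : T × T → H2)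
    (hφ₂dense : (Submodule.span ℝ (Set.range φ₂)).topologicalClosure = ⊤)
    (hker : ∀ p p' : T × T, ⟪φ₂ p, φ₂ p'⟫ = ⟪φ p.1, φ p'.1⟫ * ⟪φ p.2, φ p'.2⟫)
    (C : H2)
    (A : H →L[ℝ] H)
    (hA : ∀ s t : T, ⟪φ s, A (φ t)⟫ = ⟪φ₂ (s, t), C⟫)
    {ι : Type*} (b : HilbertBasis ι ℝ H) :
    Summable (fun i => ‖A (b i)‖ ^ 2) ∧
      Real.sqrt (∑' i, ‖A (b i)‖ ^ 2) = ‖C‖ := by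
  obtain ⟨W, hW⟩ := exists_linearIsometry_apply_eq_of_inner_eq hφ₂dense
    (g := fun p => lp.smulRight (φ p.1) (b.repr (φ p.2))) fun p p' => by
      rw [lp.inner_smulRight, LinearIsometryEquiv.inner_map_map, hker, mul_comm]
  have hWC : ∀ j, W C j = A (b j) := b.lp_apply_eq_of_inner_smulRight hφdense fun s t => by
    rw [← hW (s, t), W.inner_map_map, real_inner_comm, hA]
  have hsum : HasSum (fun j => ‖A (b j)‖ ^ 2) (‖C‖ ^ 2) := by
    simpa only [hWC, W.norm_map] using lp.hasSum_norm_sq (W C)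
  exact ⟨hsum.summable, by rw [hsum.tsum_eq, Real.sqrt_sq (norm_nonneg C)]⟩

/-- The operator `𝒞_C` associated with a symmetric element `C` of the tensor-product
RKHS `H(K ⊗ K)` is Hilbert–Schmidt, with Hilbert–Schmidt norm equal to
`‖C‖_{H(K⊗K)}`.  Model: `H` is the RKHS `H(K)` of functions on `T`, realized through
its kernel sections `φ t = K(t,·)` with dense span (so `K s t = ⟪φ s, φ t⟫` and
functions in `H(K)` have values `t ↦ ⟪φ t, f⟫`); `H2` is the tensor-product RKHS
`H(K ⊗ K)` realized through its kernel sections `φ₂ (s,t)` with dense span, so that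
`C(s,t) = ⟪φ₂ (s,t), C⟫`.  The operator `A = 𝒞_C` is characterized by
`⟪K(s,·), 𝒞_C K(t,·)⟫ = C(s,t)`.  The conclusion: for every Hilbert basis `(e i)` of
`H`, the sum `Σᵢ ‖A eᵢ‖²` converges and its square root (the Hilbert–Schmidt norm of
`A`) equals `‖C‖`. -/
theorem operator_is_hilbert_schmidt_with_norm
    {T : Type*} {H H2 : Type*}
    [NormedAddCommGroup H] [InnerProductSpace ℝ H] [CompleteSpace H]
    [NormedAddCommGroup H2] [InnerProductSpace ℝ H2] [CompleteSpace H2]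
    (φ : T → H)
    (hφdense : (Submodule.span ℝ (Set.range φ)).topologicalClosure = ⊤)
    (φ₂ : T × T → H2)
    (hφ₂dense : (Submodule.span ℝ (Set.range φ₂)).topologicalClosure = ⊤)
    (hker : ∀ p p' : T × T, ⟪φ₂ p, φ₂ p'⟫ = ⟪φ p.1, φ p'.1⟫ * ⟪φ p.2, φ p'.2⟫)
    (C : H2)
    (hCsym : ∀ s t : T, ⟪φ₂ (s, t), C⟫ = ⟪φ₂ (t, s), C⟫)
    (A : H →L[ℝ] H)
    (hA : ∀ s t : T, ⟪φ s, A (φ t)⟫ = ⟪φ₂ (s, t), C⟫)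
    {ι : Type*} (b : HilbertBasis ι ℝ H) :
    Summable (fun i => ‖A (b i)‖ ^ 2) ∧
      Real.sqrt (∑' i, ‖A (b i)‖ ^ 2) = ‖C‖ :=
  operator_is_hilbert_schmidt_with_norm_general φ hφdense φ₂ hφ₂dense hker C A hA b
end

section
/- Let ν > 0 and let B be a q × q real symmetric matrix with eigen-decomposition B = P diag(b̃₁,…,b̃_q) Pᵀ, where P is orthogonal. Then the matrix D* = P diag(g_ν(b̃₁),…,g_ν(b̃_q)) Pᵀ, where g_ν(x) = max(x − ν, 0), is the unique minimizer over all q × q real positive semi-definite matrices D of the function (1/2)‖D − B‖_F² + ν‖D‖_*, where ‖·‖_F is the Frobenius norm and ‖D‖_* is the trace norm (the sum of singular values; for positive semi-definite D this equals the trace of D). -/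
open Matrix
/-- The squared Frobenius norm of a real matrix. -/
def frobSq {q : ℕ} (W : Matrix (Fin q) (Fin q) ℝ) : ℝ := ∑ i, ∑ j, (W i j) ^ 2

/-!
Conjugation by the orthogonal matrix `P` preserves the Frobenius norm, the trace and positive
semi-definiteness, so it suffices to treat a diagonal `B = diag b`. There the objective splits
into `½ E_{ij}²` for the off-diagonal entries and the scalar functions
`f_i(t) = ½ (t - b_i)² + ν t = ½ (t - (b_i - ν))² + const` of the diagonal entries
`t = E_{ii} ≥ 0`, which are minimised at `g_ν(b_i)`. Being `1`-strongly convex, each of them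
even grows at least like `½ (t - g_ν(b_i))²`, which gives
`F(D) ≥ F(D*) + ½ ‖D - D*‖_F²` and hence minimality and uniqueness at once.
-/

lemma half_sq_sub_add_mul_le {b ν t : ℝ} (ht : 0 ≤ t) :
    1 / 2 * (max (b - ν) 0 - b) ^ 2 + ν * max (b - ν) 0 + 1 / 2 * (t - max (b - ν) 0) ^ 2 ≤
      1 / 2 * (t - b) ^ 2 + ν * t := by
  rcases le_total (b - ν) 0 with h | h
  · rw [max_eq_right h]; nlinarith
  · rw [max_eq_left h]; nlinarith

section Frobenius

variable {q : ℕ}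

lemma frobSq_nonneg (W : Matrix (Fin q) (Fin q) ℝ) : 0 ≤ frobSq W := by
  unfold frobSq; positivity

lemma frobSq_eq_zero_iff {W : Matrix (Fin q) (Fin q) ℝ} : frobSq W = 0 ↔ W = 0 := by
  have hrow (i : Fin q) : 0 ≤ ∑ j, W i j ^ 2 := Finset.sum_nonneg fun j _ => sq_nonneg _
  simp only [frobSq, Finset.sum_eq_zero_iff_of_nonneg fun i _ => hrow i,
    Finset.sum_eq_zero_iff_of_nonneg fun j _ => sq_nonneg (W _ j)]
  simp [← Matrix.ext_iff]

lemma frobSq_eq_trace_transpose_mul (W : Matrix (Fin q) (Fin q) ℝ) :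
    frobSq W = (Wᵀ * W).trace := by
  simp only [frobSq, trace, diag, mul_apply, transpose_apply, sq]
  exact Finset.sum_comm

variable {P : Matrix (Fin q) (Fin q) ℝ}

lemma trace_conj_of_mul_transpose_eq_one (hP : P * Pᵀ = 1) (W : Matrix (Fin q) (Fin q) ℝ) :
    (P * W * Pᵀ).trace = W.trace := by
  rw [trace_mul_cycle, mul_eq_one_comm.mp hP, one_mul]

lemma frobSq_conj_of_mul_transpose_eq_one (hP : P * Pᵀ = 1) (W : Matrix (Fin q) (Fin q) ℝ) :
    frobSq (P * W * Pᵀ) = frobSq W := by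
  have hPt : Pᵀ * P = 1 := mul_eq_one_comm.mp hP
  have hconj : (P * W * Pᵀ)ᵀ * (P * W * Pᵀ) = P * (Wᵀ * W) * Pᵀ := by
    simp only [transpose_mul, transpose_transpose, Matrix.mul_assoc]
    rw [← Matrix.mul_assoc Pᵀ P, hPt, Matrix.one_mul]
  rw [frobSq_eq_trace_transpose_mul, frobSq_eq_trace_transpose_mul, hconj,
    trace_conj_of_mul_transpose_eq_one hP]

end Frobenius

lemma Matrix.PosSemidef.mul_mul_transpose_same {n : Type*} [Fintype n]
    {W : Matrix n n ℝ} (hW : W.PosSemidef) (P : Matrix n n ℝ) : (P * W * Pᵀ).PosSemidef := by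
  simpa [conjTranspose_eq_transpose_of_trivial] using hW.mul_mul_conjTranspose_same P

noncomputable def proxObjective {q : ℕ} (ν : ℝ) (B D : Matrix (Fin q) (Fin q) ℝ) : ℝ :=
  1 / 2 * frobSq (D - B) + ν * D.trace

section ProxObjective

variable {q : ℕ} (ν : ℝ)

lemma proxObjective_conj {P : Matrix (Fin q) (Fin q) ℝ} (hP : P * Pᵀ = 1)
    (B E : Matrix (Fin q) (Fin q) ℝ) :
    proxObjective ν (P * B * Pᵀ) (P * E * Pᵀ) = proxObjective ν B E := by
  rw [proxObjective, ← Matrix.sub_mul, ← Matrix.mul_sub, frobSq_conj_of_mul_transpose_eq_one hP,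
    trace_conj_of_mul_transpose_eq_one hP, proxObjective]

lemma trace_eq_sum_sum_ite (E : Matrix (Fin q) (Fin q) ℝ) :
    E.trace = ∑ i, ∑ j, if i = j then E i j else 0 := by
  simp [trace]

lemma proxObjective_diagonal_add_half_frobSq_le (b : Fin q → ℝ) {E : Matrix (Fin q) (Fin q) ℝ}
    (hE : ∀ i, 0 ≤ E i i) :
    proxObjective ν (diagonal b) (diagonal fun i => max (b i - ν) 0) +
        1 / 2 * frobSq (E - diagonal fun i => max (b i - ν) 0) ≤
      proxObjective ν (diagonal b) E := by
  simp only [proxObjective, frobSq, trace_eq_sum_sum_ite, Finset.mul_sum,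
    ← Finset.sum_add_distrib]
  refine Finset.sum_le_sum fun i _ => Finset.sum_le_sum fun j _ => ?_
  rcases eq_or_ne i j with rfl | hij
  · simpa [add_right_comm] using half_sq_sub_add_mul_le (b := b i) (ν := ν) (hE i)
  · simp [hij]

lemma proxObjective_conj_diagonal_add_half_frobSq_le {P : Matrix (Fin q) (Fin q) ℝ}
    (hP : P * Pᵀ = 1) (b : Fin q → ℝ) {D : Matrix (Fin q) (Fin q) ℝ} (hD : D.PosSemidef) :
    proxObjective ν (P * diagonal b * Pᵀ) (P * (diagonal fun i => max (b i - ν) 0) * Pᵀ) +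
        1 / 2 * frobSq (D - P * (diagonal fun i => max (b i - ν) 0) * Pᵀ) ≤
      proxObjective ν (P * diagonal b * Pᵀ) D := by
  set E := Pᵀ * D * P
  have hDE : D = P * E * Pᵀ := by
    simp only [E, ← Matrix.mul_assoc, hP, Matrix.one_mul]
    rw [Matrix.mul_assoc, hP, Matrix.mul_one]
  have hE : ∀ i, 0 ≤ E i i := by
    simpa using fun i => (hD.mul_mul_transpose_same Pᵀ).diag_nonneg (i := i)
  rw [hDE, ← Matrix.sub_mul, ← Matrix.mul_sub, frobSq_conj_of_mul_transpose_eq_one hP,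
    proxObjective_conj ν hP, proxObjective_conj ν hP]
  exact proxObjective_diagonal_add_half_frobSq_le ν b hE

end ProxObjective

theorem prox_trace_norm_psd_general {q : ℕ} (ν : ℝ)
    (B P : Matrix (Fin q) (Fin q) ℝ) (b : Fin q → ℝ)
    (hP : P * Pᵀ = 1)
    (hB : B = P * Matrix.diagonal b * Pᵀ)
    (Dstar : Matrix (Fin q) (Fin q) ℝ)
    (hDstar : Dstar = P * Matrix.diagonal (fun i => max (b i - ν) 0) * Pᵀ) :
    Dstar.PosSemidef ∧
      (∀ D : Matrix (Fin q) (Fin q) ℝ, D.PosSemidef →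
        (1 / 2) * frobSq (Dstar - B) + ν * Dstar.trace ≤
          (1 / 2) * frobSq (D - B) + ν * D.trace) ∧
      (∀ D : Matrix (Fin q) (Fin q) ℝ, D.PosSemidef →
        (1 / 2) * frobSq (D - B) + ν * D.trace =
          (1 / 2) * frobSq (Dstar - B) + ν * Dstar.trace → D = Dstar) := by
  subst hB
  have growth := fun (D : Matrix (Fin q) (Fin q) ℝ) (hD : D.PosSemidef) =>
    proxObjective_conj_diagonal_add_half_frobSq_le ν hP b hD
  simp only [proxObjective, ← hDstar] at growth
  refine ⟨hDstar ▸ (PosSemidef.diagonal fun i => le_max_right _ _).mul_mul_transpose_same P,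
    fun D hD => ?_, fun D hD hmin => ?_⟩
  · linarith [growth D hD, frobSq_nonneg (D - Dstar)]
  · rw [← sub_eq_zero, ← frobSq_eq_zero_iff]
    linarith [growth D hD, frobSq_nonneg (D - Dstar)]

/-- Proposition 1: the proximal operator of the trace norm restricted to positive
semi-definite matrices.  If `B = P diag(b) Pᵀ` with `P` orthogonal, then
`D* = P diag(max (b i - ν) 0) Pᵀ` is the unique minimizer of
`(1/2)‖D - B‖_F² + ν ‖D‖_*` over positive semi-definite `D` (for such `D` the trace
norm `‖D‖_*` equals the trace of `D`). -/
theorem prox_trace_norm_psd {q : ℕ} (ν : ℝ) (hν : 0 < ν)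
    (B P : Matrix (Fin q) (Fin q) ℝ) (b : Fin q → ℝ)
    (hBsymm : B.IsSymm) (hP : P * Pᵀ = 1)
    (hB : B = P * Matrix.diagonal b * Pᵀ)
    (Dstar : Matrix (Fin q) (Fin q) ℝ)
    (hDstar : Dstar = P * Matrix.diagonal (fun i => max (b i - ν) 0) * Pᵀ) :
    Dstar.PosSemidef ∧
      (∀ D : Matrix (Fin q) (Fin q) ℝ, D.PosSemidef →
        (1 / 2) * frobSq (Dstar - B) + ν * Dstar.trace ≤
          (1 / 2) * frobSq (D - B) + ν * D.trace) ∧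
      (∀ D : Matrix (Fin q) (Fin q) ℝ, D.PosSemidef →
        (1 / 2) * frobSq (D - B) + ν * D.trace =
          (1 / 2) * frobSq (Dstar - B) + ν * Dstar.trace → D = Dstar) :=
  prox_trace_norm_psd_general ν B P b hP hB Dstar hDstar
end
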